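/- arXiv:1307.2677 — 5 statements merged into one kernel-verified Lean document; each statement's English description precedes it below -/
import Mathlib

section
/- Let k ≥ 2 be a natural number, let D > 0, and let d : Fin k → ℝ satisfy ∑_{i} 1/(1 + exp(D · d i)) ≤ 1/2. Then exp(D · d i) > 1 for every i, and for every index i there exists an index j ≠ i such that exp(D · d j) ≥ ((2k − 3)·exp(D · d i) + (2k − 1))/(exp(D · d i) − 1), i.e. d j ≥ (1/D)·log(((2k−3)·exp(D·d i) + (2k−1))/(exp(D·d i) − 1)). -/
/-!
A single term of the sum is less than `1/2`, which forces every `exp (D * d i)` above `1`.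
For the second claim, the threshold `C = ((2k-3)t + (2k-1))/(t-1)` with `t = exp (D * d i)` is
exactly the value for which `1/(1+t) + (k-1)/(1+C) = 1/2`; so the remaining `k-1` terms sum to at
most `(k-1)/(1+C)`, and one of them is at most `1/(1+C)`.
-/

open Finset

lemma one_lt_of_one_div_one_add_lt_half {t : ℝ} (ht : 0 < t) (h : 1 / (1 + t) < 1 / 2) :
    1 < t := by
  rw [div_lt_div_iff₀ (by positivity) two_pos] at h
  linarith

lemma sub_one_div_one_add_threshold {n t : ℝ} (hn : 1 < n) (ht : 1 < t) :
    (n - 1) / (1 + ((2 * n - 3) * t + (2 * n - 1)) / (t - 1)) = 1 / 2 - 1 / (1 + t) := by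
  have ht1 : t - 1 ≠ 0 := by linarith
  have hn1 : n - 1 ≠ 0 := by linarith
  have hden : 1 + ((2 * n - 3) * t + (2 * n - 1)) / (t - 1) = 2 * (n - 1) * (t + 1) / (t - 1) := by
    field_simp
    ring
  rw [hden]
  field_simp
  ring

lemma threshold_pos {n t : ℝ} (hn : 2 ≤ n) (ht : 1 < t) :
    0 < ((2 * n - 3) * t + (2 * n - 1)) / (t - 1) :=
  div_pos (by nlinarith) (by linarith)

section SumOneDivOneAdd

variable {ι : Type*} [Fintype ι] {x : ι → ℝ}

lemma one_lt_of_sum_one_div_one_add_le_half (hcard : 1 < Fintype.card ι) (hx : ∀ j, 0 < x j)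
    (h : ∑ j, 1 / (1 + x j) ≤ 1 / 2) (i : ι) : 1 < x i := by
  obtain ⟨j, hji⟩ := Fintype.exists_ne_of_one_lt_card hcard i
  have hterm : 1 / (1 + x i) < ∑ j, 1 / (1 + x j) :=
    single_lt_sum (f := fun j => 1 / (1 + x j)) hji (mem_univ i) (mem_univ j)
      (by have := hx j; positivity) fun l _ _ => by have := hx l; positivity
  exact one_lt_of_one_div_one_add_lt_half (hx i) (hterm.trans_le h)

lemma exists_ne_threshold_le_of_sum_one_div_one_add_le_half [DecidableEq ι]
    (hcard : 1 < Fintype.card ι) (hx : ∀ j, 0 < x j) (h : ∑ j, 1 / (1 + x j) ≤ 1 / 2) (i : ι) :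
    ∃ j, j ≠ i ∧
      ((2 * (Fintype.card ι : ℝ) - 3) * x i + (2 * (Fintype.card ι : ℝ) - 1)) / (x i - 1) ≤ x j := by
  have hn : (2 : ℝ) ≤ Fintype.card ι := by exact_mod_cast hcard
  set n : ℝ := (Fintype.card ι : ℝ)
  set C := ((2 * n - 3) * x i + (2 * n - 1)) / (x i - 1)
  have hxi : 1 < x i := one_lt_of_sum_one_div_one_add_le_half hcard hx h i
  have hC : 0 < C := threshold_pos hn hxi
  have hrest : ∑ j ∈ univ.erase i, 1 / (1 + x j) ≤ ∑ _j ∈ univ.erase i, 1 / (1 + C) := by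
    rw [sum_erase_eq_sub (mem_univ i), sum_const, card_erase_of_mem (mem_univ i), card_univ,
      nsmul_eq_mul, Nat.cast_pred (by omega), ← div_eq_mul_one_div,
      sub_one_div_one_add_threshold (by linarith) hxi]
    linarith
  have hne : (univ.erase i).Nonempty := by
    rw [← card_pos, card_erase_of_mem (mem_univ i), card_univ]
    omega
  obtain ⟨j, hj, hjC⟩ := exists_le_of_sum_le hne hrest
  have hxj := hx j
  refine ⟨j, ne_of_mem_erase hj, ?_⟩
  rw [div_le_div_iff_of_pos_left one_pos (by positivity) (by positivity)] at hjC
  linarith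

end SumOneDivOneAdd

/-- Arithmetic content of Lemma 3.5. -/
theorem stmt_2 (k : ℕ) (hk : 2 ≤ k) (D : ℝ) (hD : 0 < D) (d : Fin k → ℝ)
    (h : ∑ i, 1 / (1 + Real.exp (D * d i)) ≤ 1 / 2) :
    (∀ i : Fin k, 1 < Real.exp (D * d i)) ∧
    (∀ i : Fin k, ∃ j : Fin k, j ≠ i ∧
      ((2 * (k : ℝ) - 3) * Real.exp (D * d i) + (2 * (k : ℝ) - 1)) /
          (Real.exp (D * d i) - 1) ≤ Real.exp (D * d j) ∧
      (1 / D) * Real.log (((2 * (k : ℝ) - 3) * Real.exp (D * d i) + (2 * (k : ℝ) - 1)) /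
          (Real.exp (D * d i) - 1)) ≤ d j) := by
  have hcard : 1 < Fintype.card (Fin k) := by rw [Fintype.card_fin]; omega
  have hpos : ∀ j, 0 < Real.exp (D * d j) := fun j => Real.exp_pos _
  have hgt := one_lt_of_sum_one_div_one_add_le_half hcard hpos h
  refine ⟨hgt, fun i => ?_⟩
  obtain ⟨j, hji, hCj⟩ := exists_ne_threshold_le_of_sum_one_div_one_add_le_half hcard hpos h i
  rw [Fintype.card_fin] at hCj
  have hC := threshold_pos (by exact_mod_cast hk : (2 : ℝ) ≤ k) (hgt i)
  refine ⟨j, hji, hCj, ?_⟩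
  rw [one_div, inv_mul_le_iff₀ hD, Real.log_le_iff_le_exp hC]
  exact hCj
end

section
/- Let g = [[a,b],[c,d]] be a 2×2 complex matrix with determinant 1 (ad − bc = 1), with c ≠ 0 and a + d ≠ 0. Then there exist z₁, z₂ ∈ ℂ, each a fixed point of the associated Möbius transformation (i.e. c·z_i² + (d − a)·z_i − b = 0 for i = 1, 2), such that |z₁ − a/c| ≤ 2/(|c|·|a + d|) and |z₂ + d/c| ≤ 2/(|c|·|a + d|). -/
/-! The fixed points are `(a - d ± s) / (2c)` with `s² = tr² - 4`, `tr = a + d`, so their distances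
to `a/c` and `-d/c` are `|tr ∓ s| / (2|c|)`. Since `(tr - s)(tr + s) = 4`, the sign of `s` can be
chosen with `|tr - s| ≤ |tr + s|`, and then `|tr - s| · |tr| ≤ 4`. -/

lemma norm_sub_mul_norm_le_of_sq_eq {𝕜 : Type*} [RCLike 𝕜] {t s : 𝕜}
    (hs : s ^ 2 = t ^ 2 - 4) (hle : ‖t - s‖ ≤ ‖t + s‖) : ‖t - s‖ * ‖t‖ ≤ 4 := by
  have hprod : ‖t - s‖ * ‖t + s‖ = 4 := by
    rw [← norm_mul, show (t - s) * (t + s) = 4 by linear_combination -hs]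
    exact RCLike.norm_ofNat 4
  have htwo : 2 * ‖t‖ ≤ ‖t - s‖ + ‖t + s‖ := by
    calc 2 * ‖t‖ = ‖2 * t‖ := by rw [norm_mul, RCLike.norm_ofNat]
      _ = ‖(t - s) + (t + s)‖ := by ring_nf
      _ ≤ ‖t - s‖ + ‖t + s‖ := norm_add_le _ _
  calc ‖t - s‖ * ‖t‖ ≤ ‖t - s‖ * ‖t + s‖ :=
        mul_le_mul_of_nonneg_left (by linarith) (norm_nonneg _)
    _ = 4 := hprod

lemma exists_sq_eq_sub_four_and_norm_sub_mul_norm_le (t : ℂ) :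
    ∃ s : ℂ, s ^ 2 = t ^ 2 - 4 ∧ ‖t - s‖ * ‖t‖ ≤ 4 := by
  obtain ⟨w, hw⟩ := IsAlgClosed.exists_pow_nat_eq (t ^ 2 - 4) two_pos
  rcases le_total ‖t - w‖ ‖t + w‖ with hle | hle
  · exact ⟨w, hw, norm_sub_mul_norm_le_of_sq_eq hw hle⟩
  · refine ⟨-w, by rwa [neg_sq], norm_sub_mul_norm_le_of_sq_eq (by rwa [neg_sq]) ?_⟩
    simpa only [sub_neg_eq_add, ← sub_eq_add_neg] using hle

lemma fixed_point_quadratic_eq_zero {K : Type*} [Field K] [NeZero (2 : K)] {a b c d s : K}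
    (hdet : a * d - b * c = 1) (hc : c ≠ 0) (hs : s ^ 2 = (a + d) ^ 2 - 4) :
    c * ((a - d + s) / (2 * c)) ^ 2 + (d - a) * ((a - d + s) / (2 * c)) - b = 0 := by
  field_simp
  linear_combination hs + 4 * hdet

lemma norm_div_two_mul_le {𝕜 : Type*} [RCLike 𝕜] {u c t : 𝕜} (hc : c ≠ 0) (ht : t ≠ 0)
    (hu : ‖u‖ * ‖t‖ ≤ 4) :
    ‖u / (2 * c)‖ ≤ 2 / (‖c‖ * ‖t‖) := by
  have hc' : 0 < ‖c‖ := norm_pos_iff.mpr hc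
  have ht' : 0 < ‖t‖ := norm_pos_iff.mpr ht
  rw [norm_div, norm_mul, RCLike.norm_ofNat, div_le_div_iff₀ (by positivity) (by positivity)]
  nlinarith

/-- Quantitative core of Lemma 4.3: the fixed points of the Möbius transformation
associated to `[[a,b],[c,d]] ∈ SL(2,ℂ)` with `c ≠ 0` and trace `a + d ≠ 0` lie
within `2/(|c|·|a+d|)` of the centers `a/c` and `−d/c` of the isometric circles. -/
theorem stmt_5 (a b c d : ℂ) (hdet : a * d - b * c = 1) (hc : c ≠ 0)
    (htr : a + d ≠ 0) :
    ∃ z₁ z₂ : ℂ,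
      c * z₁ ^ 2 + (d - a) * z₁ - b = 0 ∧
      c * z₂ ^ 2 + (d - a) * z₂ - b = 0 ∧
      ‖z₁ - a / c‖ ≤ 2 / (‖c‖ * ‖a + d‖) ∧
      ‖z₂ + d / c‖ ≤ 2 / (‖c‖ * ‖a + d‖) := by
  obtain ⟨s, hs, hbound⟩ := exists_sq_eq_sub_four_and_norm_sub_mul_norm_le (a + d)
  have hbound' : ‖-(a + d - s)‖ * ‖a + d‖ ≤ 4 := by rwa [norm_neg]
  refine ⟨(a - d + s) / (2 * c), (a - d + -s) / (2 * c),
    fixed_point_quadratic_eq_zero hdet hc hs,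
    fixed_point_quadratic_eq_zero hdet hc (by rwa [neg_sq]), ?_, ?_⟩
  · rw [show (a - d + s) / (2 * c) - a / c = -(a + d - s) / (2 * c) by field_simp; ring]
    exact norm_div_two_mul_le hc htr hbound'
  · rw [show (a - d + -s) / (2 * c) + d / c = (a + d - s) / (2 * c) by field_simp; ring]
    exact norm_div_two_mul_le hc htr hbound
end

section
/- Let p, q ∈ ℂ with p ≠ q, and let λ ∈ ℂ with |λ| > 1. Let γ : ℂ → ℂ be the Möbius transformation with fixed points p and q obtained by conjugating z ↦ λ²z by ψ(z) = (z − p)/(z − q); explicitly γ(z) = (p·(z − q) − q·λ²·(z − p)) / ((z − q) − λ²·(z − p)). Then there exist centers o, o' ∈ ℂ and radii r, r' > 0 such that: (a) r + r' = |p − q| · 2|λ|/(|λ|² − 1); (b) the closed disks closedBall(o, r) and closedBall(o', r') are disjoint; (c) p ∈ ball(o, r) and q ∈ ball(o', r'); and (d) for every z in the open ball ball(o, r) with (z − q) − λ²(z − p) ≠ 0, one has γ(z) ∉ closedBall(o', r'). In particular, since |λ| > 1, r + r' < |p − q|·(|λ| + 1)/(|λ| − 1). -/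
/-!
Conjugating by `ψ z = (z - p) / (z - q)`, the map `γ` becomes `w ↦ L² w`, so it multiplies the
ratio `‖z - p‖ / ‖z - q‖` by `‖L‖²`. For `a = ‖L‖ > 1` the Apollonius region
`{z | a ‖z - p‖ < ‖z - q‖}` is an open disc around `p` of radius `a ‖p - q‖ / (a² - 1)`, and
`γ` maps it into `{w | ‖w - p‖ < a ‖w - q‖}`, the complement of the corresponding closed disc
around `q`.
The two closed discs are disjoint, since a common point would satisfy `a ‖z - p‖ ≤ ‖z - q‖` and
`a ‖z - q‖ ≤ ‖z - p‖`.
-/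

open Metric

section Apollonius

variable {E : Type*} [NormedAddCommGroup E] [InnerProductSpace ℝ E]

theorem norm_smul_sub_sq (t : ℝ) (x y : E) :
    ‖t • x - y‖ ^ 2 = (t - 1) * (t * ‖x‖ ^ 2 - ‖y‖ ^ 2) + t * ‖x - y‖ ^ 2 := by
  rw [norm_sub_sq_real, norm_sub_sq_real, norm_smul, real_inner_smul_left, mul_pow,
    Real.norm_eq_abs, sq_abs]
  ring

/-- The centre of the Apollonius circle `{z | a * dist z p = dist z q}`. -/
noncomputable def apolloniusCenter (a : ℝ) (p q : E) : E :=
  (a ^ 2 - 1)⁻¹ • (a ^ 2 • p - q)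

theorem sq_mul_dist_apolloniusCenter {a : ℝ} (ha : a ^ 2 ≠ 1) (p q z : E) :
    ((a ^ 2 - 1) * dist z (apolloniusCenter a p q)) ^ 2 - (a * dist p q) ^ 2 =
      (a ^ 2 - 1) * ((a * dist z p) ^ 2 - dist z q ^ 2) := by
  have hscale : (a ^ 2 - 1) • (z - apolloniusCenter a p q) = a ^ 2 • (z - p) - (z - q) := by
    rw [apolloniusCenter, smul_sub, smul_inv_smul₀ (sub_ne_zero.mpr ha), sub_smul, one_smul,
      smul_sub]
    abel
  have hnorm : |a ^ 2 - 1| * dist z (apolloniusCenter a p q) = ‖a ^ 2 • (z - p) - (z - q)‖ := by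
    rw [← hscale, norm_smul, Real.norm_eq_abs, dist_eq_norm]
  rw [mul_pow, ← sq_abs, ← mul_pow, hnorm, norm_smul_sub_sq, sub_sub_sub_cancel_left,
    dist_eq_norm z, dist_eq_norm z, dist_comm, dist_eq_norm]
  ring

theorem mem_ball_apolloniusCenter_iff {a : ℝ} (ha : 1 < a) {p q z : E} :
    z ∈ ball (apolloniusCenter a p q) (a * dist p q / (a ^ 2 - 1)) ↔ a * dist z p < dist z q := by
  have hpos : 0 < a ^ 2 - 1 := by nlinarith
  have key := sq_mul_dist_apolloniusCenter (sub_ne_zero.mp hpos.ne') p q z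
  rw [mem_ball, lt_div_iff₀ hpos, mul_comm,
    ← pow_lt_pow_iff_left₀ (by positivity) (by positivity) two_ne_zero,
    ← pow_lt_pow_iff_left₀ (by positivity) dist_nonneg two_ne_zero]
  constructor <;> intro h <;> nlinarith

theorem mem_closedBall_apolloniusCenter_iff {a : ℝ} (ha : 1 < a) {p q z : E} :
    z ∈ closedBall (apolloniusCenter a p q) (a * dist p q / (a ^ 2 - 1)) ↔
      a * dist z p ≤ dist z q := by
  have hpos : 0 < a ^ 2 - 1 := by nlinarith
  have key := sq_mul_dist_apolloniusCenter (sub_ne_zero.mp hpos.ne') p q z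
  rw [mem_closedBall, le_div_iff₀ hpos, mul_comm,
    ← pow_le_pow_iff_left₀ (by positivity) (by positivity) two_ne_zero,
    ← pow_le_pow_iff_left₀ (by positivity) dist_nonneg two_ne_zero]
  constructor <;> intro h <;> nlinarith

theorem disjoint_closedBall_apolloniusCenter {a : ℝ} (ha : 1 < a) {p q : E} (hpq : p ≠ q) :
    Disjoint (closedBall (apolloniusCenter a p q) (a * dist p q / (a ^ 2 - 1)))
      (closedBall (apolloniusCenter a q p) (a * dist q p / (a ^ 2 - 1))) := by
  refine Set.disjoint_left.mpr fun z hzp hzq => hpq (dist_le_zero.mp ?_)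
  rw [mem_closedBall_apolloniusCenter_iff ha] at hzp hzq
  have hp := le_mul_of_one_le_left (dist_nonneg (x := z) (y := p)) ha.le
  have hq := le_mul_of_one_le_left (dist_nonneg (x := z) (y := q)) ha.le
  have hzp0 : dist z p = 0 := by nlinarith
  have hzq0 : dist z q = 0 := by nlinarith
  calc dist p q ≤ dist z p + dist z q := dist_triangle_left p q z
    _ = 0 := by rw [hzp0, hzq0, add_zero]

end Apollonius

/-- The Möbius map with fixed points `p`, `q` conjugate to `w ↦ L ^ 2 * w`
by `ψ z = (z - p) / (z - q)`. -/
noncomputable def loxodromicMap (p q L z : ℂ) : ℂ :=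
  (p * (z - q) - q * L ^ 2 * (z - p)) / ((z - q) - L ^ 2 * (z - p))

section loxodromicMap

variable {p q L z : ℂ}

theorem loxodromicMap_sub_left (hD : (z - q) - L ^ 2 * (z - p) ≠ 0) :
    loxodromicMap p q L z - p = L ^ 2 * (z - p) * (p - q) / ((z - q) - L ^ 2 * (z - p)) := by
  rw [loxodromicMap]; field_simp; ring

theorem loxodromicMap_sub_right (hD : (z - q) - L ^ 2 * (z - p) ≠ 0) :
    loxodromicMap p q L z - q = (z - q) * (p - q) / ((z - q) - L ^ 2 * (z - p)) := by
  rw [loxodromicMap]; field_simp; ring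

theorem norm_loxodromicMap_sub_lt (hpq : p ≠ q) (hL : 0 < ‖L‖)
    (hD : (z - q) - L ^ 2 * (z - p) ≠ 0) (hz : ‖L‖ * ‖z - p‖ < ‖z - q‖) :
    ‖loxodromicMap p q L z - p‖ < ‖L‖ * ‖loxodromicMap p q L z - q‖ := by
  have hpq' : 0 < ‖p - q‖ := norm_pos_iff.mpr (sub_ne_zero.mpr hpq)
  rw [loxodromicMap_sub_left hD, loxodromicMap_sub_right hD, norm_div, norm_div, norm_mul,
    norm_mul, norm_mul, norm_pow, ← mul_div_assoc,
    div_lt_div_iff_of_pos_right (norm_pos_iff.mpr hD)]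
  calc ‖L‖ ^ 2 * ‖z - p‖ * ‖p - q‖ = (‖L‖ * ‖p - q‖) * (‖L‖ * ‖z - p‖) := by ring
    _ < (‖L‖ * ‖p - q‖) * ‖z - q‖ := by gcongr
    _ = ‖L‖ * (‖z - q‖ * ‖p - q‖) := by ring

end loxodromicMap

theorem two_mul_div_sq_sub_one_lt {a : ℝ} (ha : 1 < a) :
    2 * a / (a ^ 2 - 1) < (a + 1) / (a - 1) := by
  rw [div_lt_div_iff₀ (by nlinarith) (by linarith)]
  nlinarith

/-- Proposition 5.3 (non-iso): disjoint circles for a loxodromic Möbius transformation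
with fixed points `p, q` and multiplier `L²`, `|L| > 1`. -/
theorem stmt_6 (p q L : ℂ) (hpq : p ≠ q) (hL : 1 < ‖L‖) :
    ∃ (o o' : ℂ) (r r' : ℝ), 0 < r ∧ 0 < r' ∧
      r + r' = ‖p - q‖ * (2 * ‖L‖ / (‖L‖ ^ 2 - 1)) ∧
      Disjoint (Metric.closedBall o r) (Metric.closedBall o' r') ∧
      p ∈ Metric.ball o r ∧ q ∈ Metric.ball o' r' ∧
      (∀ z ∈ Metric.ball o r, (z - q) - L ^ 2 * (z - p) ≠ 0 →
        (p * (z - q) - q * L ^ 2 * (z - p)) / ((z - q) - L ^ 2 * (z - p)) ∉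
          Metric.closedBall o' r') ∧
      r + r' < ‖p - q‖ * ((‖L‖ + 1) / (‖L‖ - 1)) := by
  have hpq' : 0 < dist p q := dist_pos.mpr hpq
  have hpq'' : 0 < ‖p - q‖ := by rwa [← dist_eq_norm]
  have hsq : 0 < ‖L‖ ^ 2 - 1 := by nlinarith
  have hsum : ‖L‖ * dist p q / (‖L‖ ^ 2 - 1) + ‖L‖ * dist q p / (‖L‖ ^ 2 - 1) =
      ‖p - q‖ * (2 * ‖L‖ / (‖L‖ ^ 2 - 1)) := by
    rw [dist_comm q p, dist_eq_norm]; ring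
  have hr : 0 < ‖L‖ * dist p q / (‖L‖ ^ 2 - 1) := div_pos (mul_pos (by linarith) hpq') hsq
  refine ⟨apolloniusCenter ‖L‖ p q, apolloniusCenter ‖L‖ q p, _, _,
    hr, by rwa [dist_comm], hsum, disjoint_closedBall_apolloniusCenter hL hpq,
    (mem_ball_apolloniusCenter_iff hL).mpr (by simpa using hpq'),
    (mem_ball_apolloniusCenter_iff hL).mpr (by simpa [dist_comm] using hpq'), ?_, ?_⟩
  · intro z hz hD hw
    rw [mem_ball_apolloniusCenter_iff hL, dist_eq_norm, dist_eq_norm] at hz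
    rw [mem_closedBall_apolloniusCenter_iff hL, dist_eq_norm, dist_eq_norm] at hw
    exact (norm_loxodromicMap_sub_lt hpq (by linarith) hD hz).not_ge hw
  · rw [hsum]
    exact mul_lt_mul_of_pos_left (two_mul_div_sq_sub_one_lt hL) hpq''
end

section
/- Let (D_n), (x_n), (t_n) be sequences of real numbers with D_n > 0 for all n, D_n → 0, x_n > 1 for all n, x_n → 1, and suppose there exists ρ > 0 such that t_n ≥ ρ·((x_n^{2D_n} + 3)/(x_n^{2D_n} − 1))^{1/(2D_n)} for all n. Then 1/(t_n·(x_n² − 1)) → 0, i.e. t_n·(x_n² − 1) → ∞. -/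
open Filter Topology

/-!
Put `e = x² - 1`, `y = x^(2D)` and `p = 1/(2D)`. Since `2D ≤ 2`, `y - 1 ≤ e`, so the base
`(y + 3)/(y - 1)` of the lower bound on `t` is at least `1/e`; once `e ≤ 1` and `D ≤ 1/4`, the exponent
`p ≥ 2` can be lowered to `2`, whence `t ≥ ρ/e²`, i.e. `t·e ≥ ρ/e → ∞`.
-/

lemma rpow_two_mul_sub_one_le_sq_sub_one {x d : ℝ} (hx : 1 ≤ x) (hd : d ≤ 1) :
    x ^ (2 * d) - 1 ≤ x ^ 2 - 1 := by
  have : x ^ (2 * d) ≤ x ^ (2 : ℝ) := Real.rpow_le_rpow_of_exponent_le hx (by linarith)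
  rw [Real.rpow_two] at this
  linarith

lemma one_div_sq_sub_one_le_add_three_div_sub_one {x d : ℝ} (hx : 1 < x) (hd : 0 < d)
    (hd1 : d ≤ 1) :
    1 / (x ^ 2 - 1) ≤ (x ^ (2 * d) + 3) / (x ^ (2 * d) - 1) := by
  have hy : 0 < x ^ (2 * d) - 1 := by
    have : 1 < x ^ (2 * d) := Real.one_lt_rpow hx (by positivity)
    linarith
  calc 1 / (x ^ 2 - 1) ≤ 1 / (x ^ (2 * d) - 1) :=
        one_div_le_one_div_of_le hy (rpow_two_mul_sub_one_le_sq_sub_one hx.le hd1)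
    _ ≤ (x ^ (2 * d) + 3) / (x ^ (2 * d) - 1) := by
        gcongr
        linarith

lemma div_sq_sub_one_sq_le_mul_rpow {ρ x d : ℝ} (hρ : 0 ≤ ρ) (hx : 1 < x) (hx2 : x ^ 2 ≤ 2)
    (hd : 0 < d) (hd4 : d ≤ 1 / 4) :
    ρ / (x ^ 2 - 1) ^ 2 ≤ ρ * ((x ^ (2 * d) + 3) / (x ^ (2 * d) - 1)) ^ (1 / (2 * d)) := by
  have he : 0 < x ^ 2 - 1 := by nlinarith
  have hbase : 1 ≤ 1 / (x ^ 2 - 1) := by rw [le_one_div one_pos he]; linarith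
  have hp : (2 : ℝ) ≤ 1 / (2 * d) := by rw [le_div_iff₀ (by positivity)]; linarith
  rw [div_eq_mul_one_div ρ, ← one_div_pow]
  gcongr
  calc (1 / (x ^ 2 - 1)) ^ 2 = (1 / (x ^ 2 - 1)) ^ (2 : ℝ) := (Real.rpow_two _).symm
    _ ≤ (1 / (x ^ 2 - 1)) ^ (1 / (2 * d)) := Real.rpow_le_rpow_of_exponent_le hbase hp
    _ ≤ _ := Real.rpow_le_rpow (by positivity)
        (one_div_sq_sub_one_le_add_three_div_sub_one hx hd (by linarith)) (by positivity)

/-- Analytic core of the first step of the proof of Lemma 7.3 (axes). -/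
theorem stmt_12 (D x t : ℕ → ℝ)
    (hD : ∀ n, 0 < D n) (hD0 : Tendsto D atTop (nhds 0))
    (hx : ∀ n, 1 < x n) (hx1 : Tendsto x atTop (nhds 1))
    (ht : ∃ ρ : ℝ, 0 < ρ ∧ ∀ n,
      ρ * ((x n ^ (2 * D n) + 3) / (x n ^ (2 * D n) - 1)) ^ (1 / (2 * D n)) ≤ t n) :
    Tendsto (fun n => 1 / (t n * (x n ^ 2 - 1))) atTop (nhds 0) ∧
    Tendsto (fun n => t n * (x n ^ 2 - 1)) atTop atTop := by
  obtain ⟨ρ, hρ, hbound⟩ := ht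
  have he : ∀ n, 0 < x n ^ 2 - 1 := fun n => by nlinarith [hx n]
  have he0 : Tendsto (fun n => x n ^ 2 - 1) atTop (𝓝[>] 0) := by
    refine tendsto_nhdsWithin_iff.mpr ⟨?_, Eventually.of_forall he⟩
    simpa using (hx1.pow 2).sub_const 1
  have hlower : ∀ᶠ n in atTop, ρ / (x n ^ 2 - 1) ≤ t n * (x n ^ 2 - 1) := by
    filter_upwards [hD0.eventually (eventually_le_nhds (by norm_num : (0 : ℝ) < 1 / 4)),
      (hx1.pow 2).eventually (eventually_le_nhds (by norm_num : (1 : ℝ) ^ 2 < 2))] with n hDn hxn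
    have ht_sq := (div_sq_sub_one_sq_le_mul_rpow hρ.le (hx n) hxn (hD n) hDn).trans (hbound n)
    calc ρ / (x n ^ 2 - 1) = ρ / (x n ^ 2 - 1) ^ 2 * (x n ^ 2 - 1) := by
          field_simp [(he n).ne']
      _ ≤ t n * (x n ^ 2 - 1) := mul_le_mul_of_nonneg_right ht_sq (he n).le
  have htop : Tendsto (fun n => t n * (x n ^ 2 - 1)) atTop atTop :=
    tendsto_atTop_mono' atTop hlower (he0.inv_tendsto_nhdsGT_zero.const_mul_atTop hρ)
  exact ⟨tendsto_const_nhds.div_atTop htop, htop⟩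
end

section
/- Let (D_n), (x_n), (t_n) be sequences of real numbers with D_n > 0 for all n, D_n → 0, x_n > 1 for all n, x_n → 1, and suppose there exists ρ > 0 such that t_n ≥ ρ·(((x_n^{2D_n} + 3)·(x_n² − 1)^{2D_n})/(x_n^{2D_n} − 1))^{1/(2D_n)} for all n. Then 1/(t_n·(x_n² − 1)) → 0, i.e. t_n·(x_n² − 1) → ∞. -/
/-!
With `u = x² - 1` and `d = 2D`, the bracket in the hypothesis is at least `4 u^d / u`, because
`x^d - 1 ≤ x² - 1` once `d ≤ 2`. Taking `1/d`-th powers gives `t ≥ ρ 4^{1/d} u^{1 - 1/d}`, and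
as soon as `d ≤ 1/3` and `u ≤ 1` this is at least `ρ / u²`. Hence `t u ≥ ρ / u → ∞`.
-/

open Filter

lemma rpow_sub_one_le_sq_sub_one {y d : ℝ} (hy : 1 ≤ y) (hd : d ≤ 2) :
    y ^ d - 1 ≤ y ^ 2 - 1 := by
  have := Real.rpow_le_rpow_of_exponent_le hy hd
  rw [Real.rpow_two] at this
  linarith

lemma four_mul_rpow_sub_one_le {y d : ℝ} (hy : 1 < y) (hd : 0 < d) (hd2 : d ≤ 2) :
    4 * (y ^ 2 - 1) ^ (d - 1) ≤ (y ^ d + 3) * (y ^ 2 - 1) ^ d / (y ^ d - 1) := by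
  have hu : 0 < y ^ 2 - 1 := by nlinarith
  have hyd : 1 < y ^ d := Real.one_lt_rpow hy hd
  have hud : 0 < (y ^ 2 - 1) ^ d := Real.rpow_pos_of_pos hu d
  rw [Real.rpow_sub_one hu.ne', ← mul_div_assoc]
  exact div_le_div₀ (by positivity) (by nlinarith) (by linarith)
    (rpow_sub_one_le_sq_sub_one hy.le hd2)

lemma inv_sq_le_rpow_four_mul_rpow_sub_one {u d : ℝ} (hu : 0 < u) (hu1 : u ≤ 1)
    (hd : 0 < d) (hd3 : d ≤ 1 / 3) :
    (u ^ 2)⁻¹ ≤ (4 * u ^ (d - 1)) ^ (1 / d) := by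
  have hexp : (d - 1) * (1 / d) ≤ -2 := by
    have : 3 ≤ 1 / d := by rw [le_div_iff₀ hd]; linarith
    rw [sub_mul, one_mul, mul_one_div_cancel hd.ne']
    linarith
  have h4 : (1 : ℝ) ≤ 4 ^ (1 / d) := Real.one_le_rpow (by norm_num) (by positivity)
  calc (u ^ 2)⁻¹ = u ^ (-2 : ℝ) := by rw [Real.rpow_neg hu.le, Real.rpow_two]
    _ ≤ u ^ ((d - 1) * (1 / d)) := Real.rpow_le_rpow_of_exponent_ge hu hu1 hexp
    _ ≤ 4 ^ (1 / d) * u ^ ((d - 1) * (1 / d)) :=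
        le_mul_of_one_le_left (Real.rpow_nonneg hu.le _) h4
    _ = (4 * u ^ (d - 1)) ^ (1 / d) := by
        rw [Real.mul_rpow (by norm_num) (Real.rpow_nonneg hu.le _), Real.rpow_mul hu.le]

lemma div_le_mul_sq_sub_one_of_le {ρ y d t : ℝ} (hρ : 0 < ρ) (hy : 1 < y) (hd : 0 < d)
    (hd3 : d ≤ 1 / 3) (hu1 : y ^ 2 - 1 ≤ 1)
    (ht : ρ * ((y ^ d + 3) * (y ^ 2 - 1) ^ d / (y ^ d - 1)) ^ (1 / d) ≤ t) :
    ρ / (y ^ 2 - 1) ≤ t * (y ^ 2 - 1) := by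
  set u := y ^ 2 - 1
  have hu : 0 < u := by nlinarith
  have hpow : (4 * u ^ (d - 1)) ^ (1 / d) ≤ ((y ^ d + 3) * u ^ d / (y ^ d - 1)) ^ (1 / d) :=
    Real.rpow_le_rpow (by positivity) (four_mul_rpow_sub_one_le hy hd (by linarith))
      (by positivity)
  calc ρ / u = ρ * (u ^ 2)⁻¹ * u := by field_simp
    _ ≤ ρ * ((y ^ d + 3) * u ^ d / (y ^ d - 1)) ^ (1 / d) * u := by
        gcongr
        exact (inv_sq_le_rpow_four_mul_rpow_sub_one hu hu1 hd hd3).trans hpow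
    _ ≤ t * u := by gcongr

/-- Analytic content of Lemma 7.4 (iso-ratio). -/
theorem stmt_13 (D x t : ℕ → ℝ)
    (hD : ∀ n, 0 < D n) (hD0 : Tendsto D atTop (nhds 0))
    (hx : ∀ n, 1 < x n) (hx1 : Tendsto x atTop (nhds 1))
    (ht : ∃ ρ : ℝ, 0 < ρ ∧ ∀ n,
      ρ * (((x n ^ (2 * D n) + 3) * (x n ^ 2 - 1) ^ (2 * D n)) /
          (x n ^ (2 * D n) - 1)) ^ (1 / (2 * D n)) ≤ t n) :
    Tendsto (fun n => 1 / (t n * (x n ^ 2 - 1))) atTop (nhds 0) ∧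
    Tendsto (fun n => t n * (x n ^ 2 - 1)) atTop atTop := by
  obtain ⟨ρ, hρ, ht⟩ := ht
  have hu0 : Tendsto (fun n => x n ^ 2 - 1) atTop (nhdsWithin 0 (Set.Ioi 0)) := by
    refine tendsto_nhdsWithin_of_tendsto_nhds_of_eventually_within _ ?_
      (Eventually.of_forall fun n => ?_)
    · simpa using (hx1.pow 2).sub_const 1
    · have := hx n; simp only [Set.mem_Ioi]; nlinarith
  have hlower : ∀ᶠ n in atTop, ρ / (x n ^ 2 - 1) ≤ t n * (x n ^ 2 - 1) := by
    filter_upwards [hD0.eventually (gt_mem_nhds (by norm_num : (0 : ℝ) < 1 / 6)),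
      hu0.eventually (Ioc_mem_nhdsGT (by norm_num : (0 : ℝ) < 1))] with n hDn hun
    exact div_le_mul_sq_sub_one_of_le hρ (hx n) (by linarith [hD n]) (by linarith) hun.2 (ht n)
  have hinf : Tendsto (fun n => t n * (x n ^ 2 - 1)) atTop atTop :=
    tendsto_atTop_mono' _ hlower (by
      simpa [div_eq_mul_inv] using hu0.inv_tendsto_nhdsGT_zero.const_mul_atTop hρ)
  exact ⟨by simpa only [one_div, Pi.inv_def] using hinf.inv_tendsto_atTop, hinf⟩
end
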